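/- arXiv:2603.00034 — 3 statements merged into one kernel-verified Lean document; each statement's English description precedes it below -/
import Mathlib

section
/- Let u and v be unit vectors in ℝ² making an angle α such that α/π is irrational. Let M ⊆ ℝ² be a Lebesgue measurable set of finite Lebesgue measure which is symmetric with respect to the line ℝu and with respect to the line ℝv up to sets of measure zero (i.e., λ(σ_u(M) Δ M) = 0 and λ(σ_v(M) Δ M) = 0, where σ_u and σ_v denote the reflections of ℝ² across the lines through the origin spanned by u and v, and λ denotes Lebesgue measure). Then M is an annulus centered at the origin: there exists a measurable set M₀ ⊆ [0,∞) such that λ(M Δ {x ∈ ℝ² : ‖x‖ ∈ M₀}) = 0. -/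
/-!
The composition `σ_u ∘ σ_v` is the rotation `x ↦ (u / v) ^ 2 * x` by twice the angle between `u`
and `v`, so the a.e. stabilizer of `M` in the circle group contains a rotation of infinite order,
whose powers are dense. Since `M` has finite measure, the measure of `zM Δ M` depends continuously
on `z`, so this stabilizer is closed, hence it is the whole circle. Averaging over the Haar measure
of the circle then produces a set that is a.e. equal to `M` and exactly invariant under all
rotations, i.e. of the form `{x | ‖x‖ ∈ M₀}`.
-/

open MeasureTheory InnerProductGeometry

/-- The orthogonal reflection of the plane `ℝ² ≃ ℂ` across the line `ℝ u`
spanned by the unit vector `u`: `σ_u (x) = 2 ⟪x, u⟫ u - x`. -/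
noncomputable def lineReflection (u : ℂ) (x : ℂ) : ℂ :=
  (2 : ℝ) • (inner ℝ x u : ℝ) • u - x

open Complex ComplexConjugate Set Filter Function
open scoped Pointwise ENNReal

section AEStabilizer

variable {G X : Type*} [Group G] [TopologicalSpace G] [ContinuousInv G] [MulAction G X]
  [TopologicalSpace X] [R1Space X] [MeasurableSpace X] [BorelSpace X] [ContinuousSMul G X]
  {μ : Measure X} [μ.InnerRegularCompactLTTop] [IsLocallyFiniteMeasure μ]
  [SMulInvariantMeasure G X μ]

theorem MulAction.isClosed_aestabilizer {s : Set X} (hs : NullMeasurableSet s μ)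
    (hμs : μ s ≠ ∞) :
    IsClosed (MulAction.aestabilizer G μ s : Set G) := by
  let f : C(G × X, X) := ⟨fun p ↦ p.1⁻¹ • p.2, by fun_prop⟩
  have hf : (MulAction.aestabilizer G μ s : Set G) = {g | f.curry g ⁻¹' s =ᵐ[μ] s} := by
    ext g
    simp only [SetLike.mem_coe, MulAction.mem_aestabilizer, ← preimage_smul_inv]
    rfl
  rw [hf]
  exact isClosed_setOfPred_preimage_ae_eq f.curry.continuous
    (fun g ↦ measurePreserving_smul g⁻¹ μ) s hs hμs

end AEStabilizer

theorem Subgroup.eq_top_of_isClosed_of_denseRange_zpow {G : Type*} [Group G] [TopologicalSpace G]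
    {H : Subgroup G} (hH : IsClosed (H : Set G)) {g : G} (hg : DenseRange (fun n : ℤ ↦ g ^ n))
    (hgH : g ∈ H) : H = ⊤ := by
  rw [← coe_eq_univ, ← hH.closure_eq]
  exact (hg.mono (range_subset_iff.2 (H.zpow_mem hgH))).closure_eq

theorem exists_measurableSet_smul_invariant_ae_eq {G X : Type*} [CommGroup G] [MeasurableSpace G]
    [MeasurableMul G] [MulAction G X] [MeasurableSpace X] [MeasurableSMul₂ G X]
    (ν : Measure G) [SFinite ν] [NeZero ν] [ν.IsMulLeftInvariant] {μ : Measure X} [SFinite μ]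
    {s : Set X} (hs : MeasurableSet s) (h : ∀ g : G, g • s =ᵐ[μ] s) :
    ∃ t : Set X, MeasurableSet t ∧ (∀ (g : G) (x : X), g • x ∈ t ↔ x ∈ t) ∧ t =ᵐ[μ] s := by
  have hsmul : MeasurableSet {q : X × G | q.2 • q.1 ∈ s} := hs.preimage (by fun_prop)
  refine ⟨{x | ∀ᵐ g ∂ν, g • x ∈ s}, ?_, fun a x ↦ ?_, ?_⟩
  · simp_rw [ae_iff]
    exact measurable_measure_prodMk_left hsmul.compl (measurableSet_singleton 0)
  · have : {g | ¬ g • a • x ∈ s} = (a * ·) ⁻¹' {g | ¬ g • x ∈ s} := by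
      ext g; simp [smul_smul, mul_comm]
    simp only [mem_ofPred_eq, ae_iff, this, measure_preimage_mul]
  · have hfiber : ∀ᵐ x ∂μ, ∀ᵐ g ∂ν, g • x ∈ s ↔ x ∈ s := by
      refine (Measure.ae_ae_comm (hsmul.iff (hs.preimage measurable_fst))).2
        (ae_of_all _ fun g ↦ ?_)
      simpa [mem_inv_smul_set_iff] using eventuallyEq_set.1 (h g⁻¹)
    refine eventuallyEq_set.2 (hfiber.mono fun x hx ↦ ?_)
    rw [mem_ofPred_eq, eventually_congr hx, eventually_const]

instance : SMulInvariantMeasure Circle ℂ volume :=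
  ⟨fun z _ hs ↦ (rotation z).measurePreserving.measure_preimage hs.nullMeasurableSet⟩

noncomputable instance : MeasurableSpace Circle := borel Circle

instance : BorelSpace Circle := ⟨rfl⟩

theorem exists_setOf_norm_mem_eq_of_circle_invariant {t : Set ℂ} (ht : MeasurableSet t)
    (h : ∀ (z : Circle) (x : ℂ), z • x ∈ t ↔ x ∈ t) :
    ∃ M₀ ⊆ Ici (0 : ℝ), MeasurableSet M₀ ∧ {x : ℂ | ‖x‖ ∈ M₀} = t := by
  refine ⟨Ici 0 ∩ ofReal ⁻¹' t, inter_subset_left,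
    measurableSet_Ici.inter (ht.preimage measurable_ofReal), ?_⟩
  ext x
  have hx : Circle.exp (arg x) • (‖x‖ : ℂ) = x := by
    rw [Circle.smul_def, Circle.coe_exp, smul_eq_mul, mul_comm, norm_mul_exp_arg_mul_I]
  simp only [mem_ofPred_eq, mem_inter_iff, mem_Ici, norm_nonneg, true_and, mem_preimage]
  rw [← h (Circle.exp (arg x)), hx]

theorem Circle.denseRange_zpow_exp {θ : ℝ} (hθ : Irrational (θ / (2 * Real.pi))) :
    DenseRange (fun n : ℤ ↦ Circle.exp θ ^ n) := by
  convert AddCircle.homeomorphCircle'.surjective.denseRange.comp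
    (AddCircle.denseRange_zsmul_coe_iff.2 hθ) AddCircle.homeomorphCircle'.continuous using 1
  ext n
  rw [comp_apply, ← AddCircle.coe_zsmul, AddCircle.homeomorphCircle'_apply_mk, Circle.exp_zsmul]

lemma Circle.coe_exp_two_mul_arg {z : ℂ} (hz : ‖z‖ = 1) : (Circle.exp (2 * arg z) : ℂ) = z ^ 2 := by
  have h : (Circle.exp (arg z) : ℂ) = z := by
    simpa [hz, Circle.coe_exp] using norm_mul_exp_arg_mul_I z
  rw [← Nat.cast_ofNat, Circle.exp_natCast_mul, Circle.coe_pow, h]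

lemma irrational_two_mul_arg_div_two_pi_of_angle {u v : ℂ} (hu : u ≠ 0) (hv : v ≠ 0)
    (h : Irrational (angle u v / Real.pi)) : Irrational (2 * arg (u / v) / (2 * Real.pi)) := by
  rw [angle_eq_abs_arg hu hv] at h
  rw [mul_div_mul_left _ _ two_ne_zero]
  rcases abs_choice (arg (u / v)) with habs | habs <;> rw [habs] at h
  · exact h
  · simpa [neg_div] using h.neg

section Reflection

variable {u v : ℂ}

lemma lineReflection_eq_mul_conj (hu : ‖u‖ = 1) (x : ℂ) :
    lineReflection u x = u ^ 2 * conj x := by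
  have h : u.re * u.re + u.im * u.im = 1 := by
    simpa [normSq_apply, normSq_eq_norm_sq, hu] using normSq_eq_norm_sq u
  simp only [lineReflection, Complex.inner, Complex.ext_iff, sub_re, sub_im, smul_re, smul_im,
    mul_re, mul_im, conj_re, conj_im, pow_two, smul_eq_mul]
  constructor
  · linear_combination x.re * h
  · linear_combination x.im * h

lemma lineReflection_comp (hu : ‖u‖ = 1) (hv : ‖v‖ = 1) :
    lineReflection u ∘ lineReflection v = fun x ↦ (u / v) ^ 2 * x := by
  ext x
  simp only [comp_apply, lineReflection_eq_mul_conj hu, lineReflection_eq_mul_conj hv, map_mul,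
    map_pow, conj_conj, ← inv_eq_conj hv]
  ring

lemma lineReflection_involutive (hu : ‖u‖ = 1) : Involutive (lineReflection u) := by
  intro x
  have hu0 : u ≠ 0 := by rintro rfl; simp at hu
  simpa [hu0] using congrFun (lineReflection_comp hu hu) x

lemma measurePreserving_lineReflection (hu : ‖u‖ = 1) :
    MeasurePreserving (lineReflection u) := by
  let w : Circle := ⟨u ^ 2, mem_sphere_zero_iff_norm.2 (by simp [hu])⟩
  convert (conjLIE.trans (rotation w)).measurePreserving
  ext x
  simp only [lineReflection_eq_mul_conj hu]
  rfl

lemma preimage_lineReflection_ae_eq (hu : ‖u‖ = 1) {s : Set ℂ}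
    (hs : volume (symmDiff (lineReflection u '' s) s) = 0) :
    lineReflection u ⁻¹' s =ᵐ[volume] s := by
  rwa [← (lineReflection_involutive hu).image_eq_preimage_symm, ← measure_symmDiff_eq_zero_iff]

lemma preimage_mul_div_sq_ae_eq (hu : ‖u‖ = 1) (hv : ‖v‖ = 1) {s : Set ℂ}
    (hsu : lineReflection u ⁻¹' s =ᵐ[volume] s) (hsv : lineReflection v ⁻¹' s =ᵐ[volume] s) :
    (fun x ↦ (u / v) ^ 2 * x) ⁻¹' s =ᵐ[volume] s := by
  rw [← lineReflection_comp hu hv, preimage_comp]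
  exact ((measurePreserving_lineReflection hv).quasiMeasurePreserving.preimage_ae_eq hsu).trans hsv

end Reflection

/-- If `u, v` are unit vectors in the plane making an angle `α` with
`α / π` irrational, and `M` is a measurable set of finite measure that is symmetric
(up to measure zero) with respect to the lines `ℝ u` and `ℝ v`, then `M` is an annulus
centered at the origin: there is a measurable `M₀ ⊆ [0, ∞)` with
`λ (M Δ {x : ‖x‖ ∈ M₀}) = 0`. -/
theorem stmt_0 (u v : ℂ) (hu : ‖u‖ = 1) (hv : ‖v‖ = 1)
    (hangle : Irrational (angle u v / Real.pi))
    (M : Set ℂ) (hM : MeasurableSet M) (hMfin : volume M < ⊤)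
    (hsymu : volume (symmDiff (lineReflection u '' M) M) = 0)
    (hsymv : volume (symmDiff (lineReflection v '' M) M) = 0) :
    ∃ M₀ : Set ℝ, M₀ ⊆ Set.Ici 0 ∧ MeasurableSet M₀ ∧
      volume (symmDiff M {x : ℂ | ‖x‖ ∈ M₀}) = 0 := by
  set w := Circle.exp (2 * arg (u / v))
  have hw : (w : ℂ) = (u / v) ^ 2 := Circle.coe_exp_two_mul_arg (by simp [hu, hv])
  have hw_mem : w ∈ MulAction.aestabilizer Circle volume M := by
    rw [← inv_mem_iff, MulAction.mem_aestabilizer, ← preimage_smul]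
    simpa only [Circle.smul_def, hw, smul_eq_mul]
      using preimage_mul_div_sq_ae_eq hu hv (preimage_lineReflection_ae_eq hu hsymu)
        (preimage_lineReflection_ae_eq hv hsymv)
  have hdense : DenseRange (fun n : ℤ ↦ w ^ n) := Circle.denseRange_zpow_exp
    (irrational_two_mul_arg_div_two_pi_of_angle (by simp [← norm_ne_zero_iff, hu])
      (by simp [← norm_ne_zero_iff, hv]) hangle)
  have htop := Subgroup.eq_top_of_isClosed_of_denseRange_zpow
    (MulAction.isClosed_aestabilizer hM.nullMeasurableSet hMfin.ne) hdense hw_mem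
  obtain ⟨t, ht, ht_inv, htM⟩ := exists_measurableSet_smul_invariant_ae_eq
    (Measure.haar : Measure Circle) hM fun g ↦ (htop ▸ Subgroup.mem_top g :)
  obtain ⟨M₀, hM₀, hM₀m, rfl⟩ := exists_setOf_norm_mem_eq_of_circle_invariant ht ht_inv
  exact ⟨M₀, hM₀, hM₀m, measure_symmDiff_eq_zero_iff.2 htM.symm⟩
end

section
/- Let α ∈ ℝ be such that α/π is irrational, and let R_α denote the rotation of ℝ² about the origin by angle α. Let M ⊆ ℝ² be a Lebesgue measurable set with λ(R_α(M) Δ M) = 0. If z ∈ ℝ² is a point of Lebesgue density 1 for M, then every point w ∈ ℝ² with ‖w‖ = ‖z‖ is also a point of Lebesgue density 1 for M. -/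
/-!
The rotations `u` of the circle with `u • M =ᵐ M` form a subgroup (the a.e. stabilizer of `M`)
containing `e^{iα}`, hence dense since `α / π` is irrational. Each such rotation maps balls
to balls and preserves the measure of `M ∩ ball`, so the density ratios of `M` at `u • z`
coincide with those at `z`. Density one then passes to limit points `w` of this orbit: when
`dist w (u • z) ≤ r²`, the ball `ball (u • z) ((1 - r) r)` lies in `ball w r` and has
`(1 - r)^2` times its measure.
-/

open MeasureTheory Filter Topology

/-- A point `z` of the plane `ℝ² ≃ ℂ` is a point of Lebesgue density 1 for `M` if
`λ(M ∩ B(z,r)) / λ(B(z,r)) → 1` as `r → 0⁺`. -/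
def IsDensityOnePoint (M : Set ℂ) (z : ℂ) : Prop :=
  Tendsto (fun r : ℝ => volume (M ∩ Metric.ball z r) / volume (Metric.ball z r))
    (𝓝[>] 0) (𝓝 1)

open Metric Set MulAction Module
open scoped Pointwise

theorem measure_inter_div_le_one {α : Type*} [MeasurableSpace α] (μ : Measure α)
    (s t : Set α) : μ (s ∩ t) / μ t ≤ 1 :=
  ENNReal.div_le_of_le_mul (by rw [one_mul]; exact measure_mono inter_subset_right)

section DensityRatio

variable {E : Type*} [NormedAddCommGroup E] [NormedSpace ℝ E] [MeasurableSpace E] [BorelSpace E]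
  [FiniteDimensional ℝ E] (μ : Measure E) [μ.IsAddHaarMeasure]

theorem ofReal_pow_finrank_mul_addHaar_inter_ball_div_le (M : Set E) {x y : E} {r s : ℝ}
    (hs : 0 < s) (hxy : dist x y ≤ (1 - s) * r) :
    ENNReal.ofReal (s ^ finrank ℝ E) * (μ (M ∩ ball x (s * r)) / μ (ball x (s * r)))
      ≤ μ (M ∩ ball y r) / μ (ball y r) := by
  have hc : ENNReal.ofReal (s ^ finrank ℝ E) ≠ 0 := by positivity
  have hsub : ball x (s * r) ⊆ ball y r := ball_subset (by linarith)
  rw [Measure.addHaar_ball_mul_of_pos μ x hs, ← mul_div_assoc,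
    ENNReal.mul_div_mul_left _ _ hc ENNReal.ofReal_ne_top, ← Measure.addHaar_ball_center μ y]
  gcongr

theorem tendsto_addHaar_inter_ball_div_of_mem_closure {M : Set E} {z w : E}
    (hz : Tendsto (fun r ↦ μ (M ∩ ball z r) / μ (ball z r)) (𝓝[>] 0) (𝓝 1))
    (hw : w ∈ closure {x | ∀ r, μ (M ∩ ball x r) = μ (M ∩ ball z r)}) :
    Tendsto (fun r ↦ μ (M ∩ ball w r) / μ (ball w r)) (𝓝[>] 0) (𝓝 1) := by
  have hradius : Tendsto (fun r : ℝ ↦ (1 - r) * r) (𝓝[>] 0) (𝓝[>] 0) := by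
    refine tendsto_nhdsWithin_iff.2 ⟨?_, ?_⟩
    · exact tendsto_nhdsWithin_of_tendsto_nhds
        (((continuous_const.sub continuous_id).mul continuous_id).tendsto' 0 0 (by simp))
    · filter_upwards [Ioo_mem_nhdsGT one_pos] with r ⟨hr0, hr1⟩
      exact mul_pos (by linarith) hr0
  have hfactor :
      Tendsto (fun r : ℝ ↦ ENNReal.ofReal ((1 - r) ^ finrank ℝ E)) (𝓝[>] 0) (𝓝 1) := by
    rw [← ENNReal.ofReal_one]
    exact ENNReal.tendsto_ofReal (tendsto_nhdsWithin_of_tendsto_nhds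
      (((continuous_const.sub continuous_id).pow _).tendsto' 0 1 (by simp)))
  have hlower : Tendsto (fun r ↦ ENNReal.ofReal ((1 - r) ^ finrank ℝ E) *
      (μ (M ∩ ball z ((1 - r) * r)) / μ (ball z ((1 - r) * r)))) (𝓝[>] 0) (𝓝 1) := by
    simpa using ENNReal.Tendsto.mul hfactor (by simp) (hz.comp hradius) (by simp)
  refine tendsto_of_tendsto_of_tendsto_of_le_of_le' hlower tendsto_const_nhds ?_
    (Eventually.of_forall fun r ↦ measure_inter_div_le_one μ M (ball w r))
  filter_upwards [Ioo_mem_nhdsGT one_pos] with r ⟨hr0, hr1⟩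
  obtain ⟨x, hx, hxw⟩ := Metric.mem_closure_iff.1 hw (r * r) (by positivity)
  have := ofReal_pow_finrank_mul_addHaar_inter_ball_div_le μ M (x := x) (y := w) (r := r)
    (s := 1 - r) (by linarith) (by rw [dist_comm]; nlinarith)
  rwa [hx, Measure.addHaar_ball_center μ x, ← Measure.addHaar_ball_center μ z] at this

end DensityRatio

theorem measure_inter_ball_smul_of_mem_aestabilizer {G X : Type*} [Group G]
    [PseudoMetricSpace X] [MeasurableSpace X] [MulAction G X] [IsIsometricSMul G X] (μ : Measure X)
    [SMulInvariantMeasure G X μ] {M : Set X} {g : G} (hg : g ∈ aestabilizer G μ M) (x : X)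
    (r : ℝ) : μ (M ∩ ball (g • x) r) = μ (M ∩ ball x r) := by
  calc μ (M ∩ ball (g • x) r) = μ (g • M ∩ ball (g • x) r) :=
        measure_congr ((mem_aestabilizer.1 hg).symm.inter (ae_eq_refl _))
    _ = μ (M ∩ ball x r) := by rw [← Metric.smul_ball, ← smul_set_inter, measure_smul]

namespace Circle

instance : SMulInvariantMeasure Circle ℂ volume :=
  ⟨fun u _ hs ↦ (rotation u).measurePreserving.measure_preimage hs.nullMeasurableSet⟩

instance : IsIsometricSMul Circle ℂ :=
  ⟨fun u ↦ (rotation u).isometry⟩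

theorem denseRange_exp_zpow {α : ℝ} (hα : Irrational (α / (2 * Real.pi))) :
    DenseRange (fun n : ℤ ↦ Circle.exp α ^ n) := by
  convert AddCircle.homeomorphCircle'.surjective.denseRange.comp
    (AddCircle.denseRange_zsmul_coe_iff.2 hα) AddCircle.homeomorphCircle'.continuous using 1
  ext n : 1
  rw [Function.comp_apply, ← AddCircle.coe_zsmul, AddCircle.homeomorphCircle'_apply_mk,
    Circle.exp_zsmul]

theorem exists_smul_eq_of_norm_eq {z w : ℂ} (h : ‖z‖ = ‖w‖) :
    ∃ u : Circle, u • z = w := by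
  refine ⟨Circle.exp (Complex.arg w - Complex.arg z), ?_⟩
  rw [smul_def, coe_exp, smul_eq_mul]
  conv_rhs => rw [← Complex.norm_mul_exp_arg_mul_I w, ← h]
  conv_lhs => arg 2; rw [← Complex.norm_mul_exp_arg_mul_I z]
  rw [mul_left_comm, ← Complex.exp_add]
  push_cast
  ring_nf

end Circle

theorem stmt_1_general (α : ℝ) (hα : Irrational (α / Real.pi))
    (M : Set ℂ)
    (hrot : volume (symmDiff ((fun z : ℂ => Complex.exp (α * Complex.I) * z) '' M) M) = 0)
    (z : ℂ) (hz : IsDensityOnePoint M z)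
    (w : ℂ) (hw : ‖w‖ = ‖z‖) :
    IsDensityOnePoint M w := by
  obtain ⟨u, rfl⟩ := Circle.exists_smul_eq_of_norm_eq hw.symm
  have hexp : Circle.exp α ∈ aestabilizer Circle volume M := by
    rw [mem_aestabilizer, ← measure_symmDiff_eq_zero_iff, ← image_smul]
    exact hrot
  have hα' : Irrational (α / (2 * Real.pi)) := by
    simpa [div_div, mul_comm] using hα.div_natCast two_ne_zero
  have hdense : Dense (aestabilizer Circle volume M : Set Circle) :=
    (Circle.denseRange_exp_zpow hα').mono
      (range_subset_iff.2 fun n ↦ zpow_mem hexp n)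
  refine tendsto_addHaar_inter_ball_div_of_mem_closure volume hz (closure_mono ?_
    (mem_closure_image (f := (· • z)) (continuous_id.smul continuous_const).continuousAt
      (hdense.closure_eq ▸ mem_univ u)))
  rintro _ ⟨v, hv, rfl⟩ r
  exact measure_inter_ball_smul_of_mem_aestabilizer volume hv z r

/-- Let `α/π` be irrational and let `R_α z = e^{iα} z` be the rotation
of the plane about the origin by angle `α`. If `M` is measurable with
`λ(R_α(M) Δ M) = 0` and `z` is a point of Lebesgue density 1 for `M`, then every point
`w` with `‖w‖ = ‖z‖` is also a point of Lebesgue density 1 for `M`. -/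
theorem stmt_1 (α : ℝ) (hα : Irrational (α / Real.pi))
    (M : Set ℂ) (hM : MeasurableSet M)
    (hrot : volume (symmDiff ((fun z : ℂ => Complex.exp (α * Complex.I) * z) '' M) M) = 0)
    (z : ℂ) (hz : IsDensityOnePoint M z)
    (w : ℂ) (hw : ‖w‖ = ‖z‖) :
    IsDensityOnePoint M w :=
  stmt_1_general α hα M hrot z hz w hw
end

section
/- Let γ = (√5 − 1)/2 and let {γⁿω} be Kakutani's γ-sequence of partitions of [0,1]. Then for every n ≥ 0, every interval of the partition γⁿω has length either γⁿ or γ^{n+1}; moreover γⁿω consists of exactly F_{n+2} intervals, of which F_{n+1} have length γⁿ and F_n have length γ^{n+1}, where {F_k} is the Fibonacci sequence with F_0 = 0, F_1 = F_2 = 1. -/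
/-!
If every interval of a partition has length `L` or `L γ`, and some has length `L`, then the
`γ`-refinement cuts exactly the intervals of length `L`, each into a left piece of length `L γ`
and a right piece of length `(1 - γ) L = L γ²`, while those of length `L γ` survive. So the
intervals of length `L γ` of the refinement are the old short ones together with the left pieces,
and those of length `L γ²` are the right pieces: the counts `(long, short)` go from `(a, b)` to
`(a + b, a)`, the Fibonacci recursion. Counting the pieces needs that distinct intervals never
overlap, which every `α`-refinement with `0 ≤ α ≤ 1` preserves.
-/

open scoped Classical

/-- A partition of `[0,1]` is modelled as the finite set of the pairs `(a, b)` of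
endpoints of its intervals `[a, b]`.  The Kakutani `α`-refinement of a partition `P`
splits every interval of `P` of maximal length in the proportion `α : (1 - α)`. -/
noncomputable def kakutaniRefine (α : ℝ) (P : Finset (ℝ × ℝ)) : Finset (ℝ × ℝ) :=
  let m : ℝ := ((P.image fun p => p.2 - p.1).max).unbotD 0
  (P.filter fun p => p.2 - p.1 < m) ∪
    ((P.filter fun p => p.2 - p.1 = m).image fun p => (p.1, p.1 + α * (p.2 - p.1))) ∪
    ((P.filter fun p => p.2 - p.1 = m).image fun p => (p.1 + α * (p.2 - p.1), p.2))

/-- Kakutani's `α`-sequence of partitions: `αⁿω` is the `n`-fold `α`-refinement of the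
trivial partition `ω = {[0,1]}` of `[0,1]`. -/
noncomputable def kakutaniPartition (α : ℝ) : ℕ → Finset (ℝ × ℝ)
  | 0 => {((0 : ℝ), (1 : ℝ))}
  | n + 1 => kakutaniRefine α (kakutaniPartition α n)

open Finset

theorem Finset.card_eq_card_filter_eq_add_card_filter_eq {ι β : Type*} [DecidableEq β]
    {s : Finset ι} {f : ι → β} {a b : β} (h : ∀ x ∈ s, f x = a ∨ f x = b) (hab : a ≠ b) :
    #s = #(s.filter fun x => f x = a) + #(s.filter fun x => f x = b) := by
  rw [← card_filter_add_card_filter_not (p := fun x => f x = a)]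
  congr 2
  refine filter_congr fun x hx => ?_
  rcases h x hx with hx | hx <;> simp [hx, hab, hab.symm]

namespace Kakutani

noncomputable def maxLength (P : Finset (ℝ × ℝ)) : ℝ :=
  ((P.image fun p => p.2 - p.1).max).unbotD 0

def leftPiece (α : ℝ) (p : ℝ × ℝ) : ℝ × ℝ := (p.1, p.1 + α * (p.2 - p.1))

def rightPiece (α : ℝ) (p : ℝ × ℝ) : ℝ × ℝ := (p.1 + α * (p.2 - p.1), p.2)

theorem kakutaniRefine_eq (α : ℝ) (P : Finset (ℝ × ℝ)) :
    kakutaniRefine α P = P.filter (fun p => p.2 - p.1 < maxLength P) ∪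
      (P.filter fun p => p.2 - p.1 = maxLength P).image (leftPiece α) ∪
      (P.filter fun p => p.2 - p.1 = maxLength P).image (rightPiece α) :=
  rfl

theorem mem_kakutaniRefine {α : ℝ} {P : Finset (ℝ × ℝ)} {q : ℝ × ℝ} :
    q ∈ kakutaniRefine α P ↔ (q ∈ P ∧ q.2 - q.1 < maxLength P) ∨
      ∃ p ∈ P, p.2 - p.1 = maxLength P ∧ (q = leftPiece α p ∨ q = rightPiece α p) := by
  simp only [kakutaniRefine_eq, mem_union, mem_filter, mem_image]
  constructor
  · rintro ((h | ⟨p, ⟨hp, hpm⟩, rfl⟩) | ⟨p, ⟨hp, hpm⟩, rfl⟩)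
    exacts [.inl h, .inr ⟨p, hp, hpm, .inl rfl⟩, .inr ⟨p, hp, hpm, .inr rfl⟩]
  · rintro (h | ⟨p, hp, hpm, rfl | rfl⟩)
    exacts [.inl (.inl h), .inl (.inr ⟨p, ⟨hp, hpm⟩, rfl⟩), .inr ⟨p, ⟨hp, hpm⟩, rfl⟩]

theorem maxLength_eq {P : Finset (ℝ × ℝ)} {L : ℝ} (hle : ∀ p ∈ P, p.2 - p.1 ≤ L)
    (hmem : ∃ p ∈ P, p.2 - p.1 = L) : maxLength P = L := by
  obtain ⟨p, hp, hpL⟩ := hmem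
  have : (P.image fun p => p.2 - p.1).max = L :=
    le_antisymm
      (Finset.max_le fun _ ha => by
        obtain ⟨q, hq, rfl⟩ := mem_image.1 ha
        exact WithBot.coe_le_coe.2 (hle q hq))
      (hpL ▸ le_max (mem_image_of_mem _ hp))
  rw [maxLength, this]
  rfl

theorem length_leftPiece (α : ℝ) (p : ℝ × ℝ) :
    (leftPiece α p).2 - (leftPiece α p).1 = α * (p.2 - p.1) := by
  simp only [leftPiece]; ring

theorem length_rightPiece (α : ℝ) (p : ℝ × ℝ) :
    (rightPiece α p).2 - (rightPiece α p).1 = (1 - α) * (p.2 - p.1) := by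
  simp only [rightPiece]; ring

def Nonoverlapping (p q : ℝ × ℝ) : Prop := p.2 ≤ q.1 ∨ q.2 ≤ p.1

theorem Nonoverlapping.symm {p q : ℝ × ℝ} (h : Nonoverlapping p q) : Nonoverlapping q p :=
  Or.symm h

theorem Nonoverlapping.mono {p q p' q' : ℝ × ℝ} (h : Nonoverlapping p q)
    (hp₁ : p.1 ≤ p'.1) (hp₂ : p'.2 ≤ p.2) (hq₁ : q.1 ≤ q'.1) (hq₂ : q'.2 ≤ q.2) :
    Nonoverlapping p' q' := by
  unfold Nonoverlapping at *
  rcases h with h | h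
  · exact .inl (by linarith)
  · exact .inr (by linarith)

def IsIntervalPacking (P : Finset (ℝ × ℝ)) : Prop :=
  (∀ p ∈ P, p.1 ≤ p.2) ∧ (P : Set (ℝ × ℝ)).Pairwise Nonoverlapping

theorem IsIntervalPacking.eq_of_fst_eq {P : Finset (ℝ × ℝ)} (hP : IsIntervalPacking P)
    {p q : ℝ × ℝ} (hp : p ∈ P) (hq : q ∈ P) (hpl : p.1 < p.2) (hql : q.1 < q.2)
    (h : p.1 = q.1) : p = q := by
  by_contra hne
  rcases hP.2 hp hq hne with h' | h' <;> linarith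

section Refine

variable {α : ℝ}

theorem piece_subinterval (hα₀ : 0 ≤ α) (hα₁ : α ≤ 1) {p q : ℝ × ℝ} (hp : p.1 ≤ p.2)
    (hq : q = leftPiece α p ∨ q = rightPiece α p) : p.1 ≤ q.1 ∧ q.2 ≤ p.2 := by
  rcases hq with rfl | rfl <;> simp only [leftPiece, rightPiece] <;> constructor <;> nlinarith

theorem IsIntervalPacking.kakutaniRefine (hα₀ : 0 ≤ α) (hα₁ : α ≤ 1) {P : Finset (ℝ × ℝ)}
    (hP : IsIntervalPacking P) :
    IsIntervalPacking (kakutaniRefine α P) := by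
  have old_piece : ∀ q ∈ P, q.2 - q.1 < maxLength P → ∀ p ∈ P, p.2 - p.1 = maxLength P →
      ∀ q' : ℝ × ℝ, (q' = leftPiece α p ∨ q' = rightPiece α p) → Nonoverlapping q q' := by
    intro q hq hqm p hp hpm q' hq'
    have hqp : q ≠ p := by rintro rfl; linarith
    obtain ⟨h₁, h₂⟩ := piece_subinterval hα₀ hα₁ (hP.1 p hp) hq'
    exact (hP.2 hq hp hqp).mono le_rfl le_rfl h₁ h₂
  refine ⟨fun q hq => ?_, fun q hq q' hq' hne => ?_⟩
  · rcases mem_kakutaniRefine.1 hq with ⟨hqP, -⟩ | ⟨p, hp, -, hqp⟩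
    · exact hP.1 q hqP
    · rcases hqp with rfl | rfl
      · simp only [leftPiece]; nlinarith [hP.1 p hp]
      · simp only [rightPiece]; nlinarith [hP.1 p hp]
  rcases mem_kakutaniRefine.1 hq with ⟨hqP, hqm⟩ | ⟨p, hp, hpm, hqp⟩ <;>
    rcases mem_kakutaniRefine.1 hq' with ⟨hq'P, hq'm⟩ | ⟨p', hp', hp'm, hq'p'⟩
  · exact hP.2 hqP hq'P hne
  · exact old_piece q hqP hqm p' hp' hp'm q' hq'p'
  · exact (old_piece q' hq'P hq'm p hp hpm q hqp).symm
  by_cases hpp' : p = p'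
  · subst hpp'
    rcases hqp with rfl | rfl <;> rcases hq'p' with rfl | rfl
    · exact absurd rfl hne
    · exact .inl le_rfl
    · exact .inr le_rfl
    · exact absurd rfl hne
  · obtain ⟨h₁, h₂⟩ := piece_subinterval hα₀ hα₁ (hP.1 p hp) hqp
    obtain ⟨h₁', h₂'⟩ := piece_subinterval hα₀ hα₁ (hP.1 p' hp') hq'p'
    exact (hP.2 hp hp' hpp').mono h₁ h₂ h₁' h₂'

theorem isIntervalPacking_kakutaniPartition (hα₀ : 0 ≤ α) (hα₁ : α ≤ 1) (n : ℕ) :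
    IsIntervalPacking (kakutaniPartition α n) := by
  induction n with
  | zero =>
    refine ⟨fun p hp => ?_, ?_⟩
    · rw [kakutaniPartition, mem_singleton] at hp
      simp [hp]
    · simp [kakutaniPartition]
  | succ n ih => exact ih.kakutaniRefine hα₀ hα₁

end Refine

section GoldenStep

variable {γ L : ℝ} {P : Finset (ℝ × ℝ)}

theorem kakutaniRefine_eq_of_two_lengths (hγ₁ : γ < 1) (hL : 0 < L)
    (hlen : ∀ p ∈ P, p.2 - p.1 = L ∨ p.2 - p.1 = L * γ) (hlong : ∃ p ∈ P, p.2 - p.1 = L) :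
    kakutaniRefine γ P = P.filter (fun p => p.2 - p.1 = L * γ) ∪
      (P.filter fun p => p.2 - p.1 = L).image (leftPiece γ) ∪
      (P.filter fun p => p.2 - p.1 = L).image (rightPiece γ) := by
  have hLγ : L * γ < L := by nlinarith
  have hmax : maxLength P = L :=
    maxLength_eq (fun p hp => (hlen p hp).elim le_of_eq fun h => h ▸ hLγ.le) hlong
  rw [kakutaniRefine_eq, hmax]
  congr 2
  refine filter_congr fun p hp => ?_
  rcases hlen p hp with h | h <;> rw [h] <;> simp [hLγ, hLγ.ne']

theorem length_of_mem_image_leftPiece {q : ℝ × ℝ}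
    (hq : q ∈ (P.filter fun p => p.2 - p.1 = L).image (leftPiece γ)) : q.2 - q.1 = L * γ := by
  obtain ⟨p, hp, rfl⟩ := mem_image.1 hq
  rw [length_leftPiece, (mem_filter.1 hp).2, mul_comm]

theorem length_of_mem_image_rightPiece (hγ : γ ^ 2 = 1 - γ) {q : ℝ × ℝ}
    (hq : q ∈ (P.filter fun p => p.2 - p.1 = L).image (rightPiece γ)) :
    q.2 - q.1 = L * γ * γ := by
  obtain ⟨p, hp, rfl⟩ := mem_image.1 hq
  rw [length_rightPiece, (mem_filter.1 hp).2, ← hγ]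
  ring

theorem card_image_filter_length_eq (f : ℝ × ℝ → ℝ × ℝ)
    (hf : ∀ p q, p.2 - p.1 = q.2 - q.1 → f p = f q → p = q) :
    #((P.filter fun p => p.2 - p.1 = L).image f) = #(P.filter fun p => p.2 - p.1 = L) :=
  card_image_of_injOn fun p hp q hq => hf p q ((mem_filter.1 hp).2.trans (mem_filter.1 hq).2.symm)

theorem card_filter_kakutaniRefine_long (hγ₀ : 0 < γ) (hγ : γ ^ 2 = 1 - γ) (hL : 0 < L)
    (hP : IsIntervalPacking P) (hlen : ∀ p ∈ P, p.2 - p.1 = L ∨ p.2 - p.1 = L * γ)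
    (hlong : ∃ p ∈ P, p.2 - p.1 = L) :
    #((kakutaniRefine γ P).filter fun q => q.2 - q.1 = L * γ) =
      #(P.filter fun p => p.2 - p.1 = L * γ) + #(P.filter fun p => p.2 - p.1 = L) := by
  have hγ₁ : γ < 1 := by nlinarith
  have hLγ : L * γ < L := mul_lt_of_lt_one_right hL hγ₁
  have hLγγ : L * γ * γ < L * γ := mul_lt_of_lt_one_right (mul_pos hL hγ₀) hγ₁
  -- a short interval of `P` and the left piece of a long one share their left end
  have hdisj : Disjoint (P.filter fun p => p.2 - p.1 = L * γ)
      ((P.filter fun p => p.2 - p.1 = L).image (leftPiece γ)) := by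
    refine disjoint_left.2 fun q hq hq' => ?_
    obtain ⟨hqP, hql⟩ := mem_filter.1 hq
    obtain ⟨p, hp, rfl⟩ := mem_image.1 hq'
    obtain ⟨hpP, hpl⟩ := mem_filter.1 hp
    have hqp : leftPiece γ p = p :=
      hP.eq_of_fst_eq hqP hpP (by linarith [mul_pos hL hγ₀]) (by linarith) rfl
    rw [hqp, hpl] at hql
    exact hLγ.ne' hql
  rw [kakutaniRefine_eq_of_two_lengths hγ₁ hL hlen hlong, filter_union, filter_union,
    filter_true_of_mem fun q hq => (mem_filter.1 hq).2,
    filter_true_of_mem fun q hq => length_of_mem_image_leftPiece hq,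
    filter_false_of_mem fun q hq => ((length_of_mem_image_rightPiece hγ hq).trans_lt hLγγ).ne,
    union_empty, card_union_of_disjoint hdisj,
    card_image_filter_length_eq _ fun p q hpq h => by
      simp only [leftPiece, Prod.mk.injEq] at h
      exact Prod.ext h.1 (by linarith)]

theorem card_filter_kakutaniRefine_short (hγ₀ : 0 < γ) (hγ : γ ^ 2 = 1 - γ) (hL : 0 < L)
    (hlen : ∀ p ∈ P, p.2 - p.1 = L ∨ p.2 - p.1 = L * γ) (hlong : ∃ p ∈ P, p.2 - p.1 = L) :
    #((kakutaniRefine γ P).filter fun q => q.2 - q.1 = L * γ * γ) =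
      #(P.filter fun p => p.2 - p.1 = L) := by
  have hγ₁ : γ < 1 := by nlinarith
  have hLγγ : L * γ * γ < L * γ := mul_lt_of_lt_one_right (mul_pos hL hγ₀) hγ₁
  rw [kakutaniRefine_eq_of_two_lengths hγ₁ hL hlen hlong, filter_union, filter_union,
    filter_false_of_mem fun q hq => ((mem_filter.1 hq).2.trans_ne hLγγ.ne'),
    filter_false_of_mem fun q hq => ((length_of_mem_image_leftPiece hq).trans_ne hLγγ.ne'),
    filter_true_of_mem fun q hq => length_of_mem_image_rightPiece hγ hq,
    empty_union, empty_union,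
    card_image_filter_length_eq _ fun p q hpq h => by
      simp only [rightPiece, Prod.mk.injEq] at h
      exact Prod.ext (by linarith) h.2]

theorem length_of_mem_kakutaniRefine (hγ : γ ^ 2 = 1 - γ) (hL : 0 < L)
    (hlen : ∀ p ∈ P, p.2 - p.1 = L ∨ p.2 - p.1 = L * γ) (hlong : ∃ p ∈ P, p.2 - p.1 = L) :
    ∀ q ∈ kakutaniRefine γ P, q.2 - q.1 = L * γ ∨ q.2 - q.1 = L * γ * γ := by
  have hγ₁ : γ < 1 := by nlinarith
  intro q hq
  rw [kakutaniRefine_eq_of_two_lengths hγ₁ hL hlen hlong, mem_union, mem_union] at hq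
  rcases hq with (hq | hq) | hq
  exacts [.inl (mem_filter.1 hq).2, .inl (length_of_mem_image_leftPiece hq),
    .inr (length_of_mem_image_rightPiece hγ hq)]

end GoldenStep

theorem length_card_kakutaniPartition {γ : ℝ} (hγ₀ : 0 < γ) (hγ : γ ^ 2 = 1 - γ) (n : ℕ) :
    (∀ p ∈ kakutaniPartition γ n, p.2 - p.1 = γ ^ n ∨ p.2 - p.1 = γ ^ (n + 1)) ∧
    #((kakutaniPartition γ n).filter fun p => p.2 - p.1 = γ ^ n) = Nat.fib (n + 1) ∧
    #((kakutaniPartition γ n).filter fun p => p.2 - p.1 = γ ^ (n + 1)) = Nat.fib n := by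
  have hγ₁ : γ < 1 := by nlinarith
  induction n with
  | zero => simp [kakutaniPartition, filter_singleton, hγ₁.ne']
  | succ n ih =>
    simp only [pow_succ] at ih ⊢
    obtain ⟨hlen, hlong, hshort⟩ := ih
    have hL : 0 < γ ^ n := pow_pos hγ₀ n
    obtain ⟨p, hp⟩ := card_pos.1 (hlong ▸ Nat.fib_pos.2 n.succ_pos)
    have hex : ∃ p ∈ kakutaniPartition γ n, p.2 - p.1 = γ ^ n := ⟨p, mem_filter.1 hp⟩
    have hP := isIntervalPacking_kakutaniPartition hγ₀.le hγ₁.le n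
    rw [kakutaniPartition]
    refine ⟨length_of_mem_kakutaniRefine hγ hL hlen hex, ?_, ?_⟩
    · rw [card_filter_kakutaniRefine_long hγ₀ hγ hL hP hlen hex, hlong, hshort,
        Nat.fib_add_two]
    · rw [card_filter_kakutaniRefine_short hγ₀ hγ hL hlen hex, hlong]

end Kakutani

/-- Let `γ = (√5 - 1)/2`.  For every `n ≥ 0`, every interval of the
Kakutani partition `γⁿω` has length `γⁿ` or `γ^{n+1}`; moreover `γⁿω` consists of
exactly `F_{n+2}` intervals, of which `F_{n+1}` have length `γⁿ` and `F_n` have length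
`γ^{n+1}`, where `F` is the Fibonacci sequence with `F_0 = 0`, `F_1 = F_2 = 1`. -/
theorem stmt_7 (γ : ℝ) (hγ : γ = (Real.sqrt 5 - 1) / 2) (n : ℕ) :
    (∀ p ∈ kakutaniPartition γ n, p.2 - p.1 = γ ^ n ∨ p.2 - p.1 = γ ^ (n + 1)) ∧
    (kakutaniPartition γ n).card = Nat.fib (n + 2) ∧
    ((kakutaniPartition γ n).filter fun p => p.2 - p.1 = γ ^ n).card = Nat.fib (n + 1) ∧
    ((kakutaniPartition γ n).filter fun p => p.2 - p.1 = γ ^ (n + 1)).card = Nat.fib n := by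
  have hγψ : γ = -Real.goldenConj := by rw [hγ, Real.goldenConj]; ring
  have hγ₀ : 0 < γ := hγψ ▸ neg_pos.2 Real.goldenConj_neg
  have hγ₁ : γ < 1 := hγψ ▸ neg_lt.1 Real.neg_one_lt_goldenConj
  have hγsq : γ ^ 2 = 1 - γ := by rw [hγψ, neg_sq, Real.goldenConj_sq]; ring
  obtain ⟨hlen, hlong, hshort⟩ := Kakutani.length_card_kakutaniPartition hγ₀ hγsq n
  refine ⟨hlen, ?_, hlong, hshort⟩
  rw [card_eq_card_filter_eq_add_card_filter_eq hlen
      (pow_lt_pow_right_of_lt_one₀ hγ₀ hγ₁ n.lt_succ_self).ne',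
    hlong, hshort, Nat.fib_add_two, add_comm]
end
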